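/- No cycle of length at least 5 is 12-representable; equivalently, the cycle C_n for n ≥ 5 admits no {I_3, J_4, Q_4}-free labeling. -/

import Mathlib

/-- The subword of `w` consisting of the occurrences of `x` and `y`. -/
def subw {n : ℕ} (w : List (Fin n)) (x y : Fin n) : List (Fin n) :=
  w.filter fun a => decide (a = x ∨ a = y)

/-- A word has a 12-match if some letter is immediately followed by a strictly larger one. -/
def Has12 {n : ℕ} (s : List (Fin n)) : Prop :=
  ∃ a b : Fin n, a < b ∧ [a, b] <:+: s

/-- `w` 12-represents the labeled graph `G` on `Fin n`. -/
def Rep12 {n : ℕ} (w : List (Fin n)) (G : SimpleGraph (Fin n)) : Prop :=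
  (∀ i : Fin n, i ∈ w) ∧
  ∀ x y : Fin n, x ≠ y → (G.Adj x y ↔ ¬ Has12 (subw w x y))

/-- A graph is 12-representable if some labeling of its vertices admits a 12-representant. -/
def Rep12able {V : Type} [Fintype V] (G : SimpleGraph V) : Prop :=
  ∃ (f : V ≃ Fin (Fintype.card V)) (w : List (Fin (Fintype.card V))),
    Rep12 w (G.map f.toEmbedding)
/-- A labeled graph on `Fin n` is $\{I_3, J_4, Q_4\}$-free. -/
def I3J4Q4Free {n : ℕ} (G : SimpleGraph (Fin n)) : Prop :=
  (¬ ∃ a b c : Fin n, a < b ∧ b < c ∧ G.Adj a b ∧ G.Adj b c ∧ ¬ G.Adj a c) ∧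
  (¬ ∃ a b c d : Fin n, a < b ∧ b < c ∧ c < d ∧
    G.Adj a c ∧ G.Adj b d ∧ ¬ G.Adj a b ∧ ¬ G.Adj a d ∧ ¬ G.Adj b c ∧ ¬ G.Adj c d) ∧
  (¬ ∃ a b c d : Fin n, a < b ∧ b < c ∧ c < d ∧
    G.Adj a d ∧ G.Adj b c ∧ ¬ G.Adj a b ∧ ¬ G.Adj a c ∧ ¬ G.Adj b d ∧ ¬ G.Adj c d)

/-! In a 12-representant `w` of a labeled graph, for `x < y` the edge `xy` is present iff no
occurrence of `x` precedes one of `y` in `w`. Each of `I₃`, `J₄`, `Q₄` would then force an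
impossible order of occurrences, so a 12-representable labeling is `{I₃, J₄, Q₄}`-free.

In `Cₙ` with `n ≥ 5`, for distinct `u`, `v` some neighbour of `u` lies outside `N[v]`. Let `s < p`
be the two smallest labels of a `{I₃, J₄, Q₄}`-free labeling. `I₃`-freeness rules out the edge
`sp`; pick such a neighbour `x` of `s` avoiding `N[p]` and `y` of `p` avoiding `N[s]`. Both lie
above `p`, so the non-edge `xy` would create a `J₄` or a `Q₄`, while an edge `xy` creates an `I₃`.
-/

namespace List

variable {α : Type*} {a b c d : α} {l l₁ l₂ : List α}

theorem pair_sublist_iff_exists_append :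
    [a, b] <+ l ↔ ∃ l₁ l₂, l = l₁ ++ l₂ ∧ a ∈ l₁ ∧ b ∈ l₂ := by
  rw [cons_sublist_iff]
  simp only [singleton_sublist]

theorem pair_sublist_append (ha : a ∈ l₁) (hb : b ∈ l₂) : [a, b] <+ l₁ ++ l₂ :=
  pair_sublist_iff_exists_append.2 ⟨l₁, l₂, rfl, ha, hb⟩

theorem Sublist.pair_sublist_or_of_mem (h : [a, c] <+ l) (hb : b ∈ l) :
    [a, b] <+ l ∨ [b, c] <+ l := by
  obtain ⟨l₁, l₂, rfl, ha, hc⟩ := pair_sublist_iff_exists_append.1 h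
  rcases mem_append.1 hb with hb | hb
  · exact Or.inr (pair_sublist_append hb hc)
  · exact Or.inl (pair_sublist_append ha hb)

theorem Sublist.pair_sublist_or_of_pair_sublist (h₁ : [a, b] <+ l) (h₂ : [c, d] <+ l) :
    [a, d] <+ l ∨ [c, b] <+ l := by
  obtain ⟨l₁, l₂, rfl, ha, hb⟩ := pair_sublist_iff_exists_append.1 h₁
  obtain ⟨m₁, m₂, hm, hc, hd⟩ := pair_sublist_iff_exists_append.1 h₂
  have hl : l₁ <+: l₁ ++ l₂ := prefix_append _ _
  have hm' : m₁ <+: l₁ ++ l₂ := hm ▸ prefix_append _ _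
  rcases le_total l₁.length m₁.length with hle | hle
  · rw [hm]
    exact Or.inl (pair_sublist_append ((prefix_of_prefix_length_le hl hm' hle).subset ha) hd)
  · exact Or.inr (pair_sublist_append ((prefix_of_prefix_length_le hm' hl hle).subset hc) hb)

end List

open List

section Rep12

variable {n : ℕ} {w s : List (Fin n)} {x y : Fin n} {G : SimpleGraph (Fin n)}

theorem not_has12_iff_pairwise : ¬ Has12 s ↔ s.Pairwise (· ≥ ·) := by
  rw [← isChain_iff_pairwise, isChain_iff_forall_rel_of_append_cons_cons]
  simp only [Has12, IsInfix, not_exists, not_and]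
  constructor
  · intro h a b l₁ l₂ hs
    by_contra hab
    exact h a b (not_le.1 hab) l₁ l₂ (by simp [hs])
  · intro h a b hab l₁ l₂ hs
    exact absurd (h (l₁ := l₁) (l₂ := l₂) (by simp [← hs])) (not_le.2 hab)

theorem has12_subw_iff (hxy : x < y) : Has12 (subw w x y) ↔ [x, y] <+ w := by
  rw [← not_iff_not, not_has12_iff_pairwise, pairwise_iff_forall_sublist]
  constructor
  · intro h hw
    have hsub : [x, y] <+ subw w x y := by
      simpa [subw] using hw.filter (fun a => decide (a = x ∨ a = y))
    exact not_le.2 hxy (h hsub)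
  · intro h a b hab
    by_contra hba
    have hmem : ∀ c ∈ [a, b], c = x ∨ c = y := fun c hc => by
      simpa [subw] using (mem_filter.1 (hab.subset hc)).2
    obtain ⟨rfl, rfl⟩ : a = x ∧ b = y := by
      rcases hmem a (by simp) with rfl | rfl <;> rcases hmem b (by simp) with rfl | rfl <;>
        first | exact ⟨rfl, rfl⟩ | order
    exact h (hab.trans filter_sublist)

theorem Rep12.adj_iff (hw : Rep12 w G) (hxy : x < y) : G.Adj x y ↔ ¬ [x, y] <+ w :=
  (hw.2 x y hxy.ne).trans (not_congr (has12_subw_iff hxy))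

theorem Rep12.i3j4q4Free (hw : Rep12 w G) : I3J4Q4Free G := by
  have pair_sublist {x y : Fin n} (hxy : x < y) (h : ¬ G.Adj x y) : [x, y] <+ w :=
    not_not.1 (mt (hw.adj_iff hxy).2 h)
  refine ⟨?_, ?_, ?_⟩
  · rintro ⟨a, b, c, hab, hbc, eab, ebc, nac⟩
    rcases (pair_sublist (hab.trans hbc) nac).pair_sublist_or_of_mem (hw.1 b) with h | h
    · exact (hw.adj_iff hab).1 eab h
    · exact (hw.adj_iff hbc).1 ebc h
  · rintro ⟨a, b, c, d, hab, hbc, hcd, eac, ebd, -, nad, nbc, -⟩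
    rcases (pair_sublist (hab.trans (hbc.trans hcd)) nad).pair_sublist_or_of_pair_sublist
      (pair_sublist hbc nbc) with h | h
    · exact (hw.adj_iff (hab.trans hbc)).1 eac h
    · exact (hw.adj_iff (hbc.trans hcd)).1 ebd h
  · rintro ⟨a, b, c, d, hab, hbc, hcd, ead, ebc, -, nac, nbd, -⟩
    rcases (pair_sublist (hab.trans hbc) nac).pair_sublist_or_of_pair_sublist
      (pair_sublist (hbc.trans hcd) nbd) with h | h
    · exact (hw.adj_iff (hab.trans (hbc.trans hcd))).1 ead h
    · exact (hw.adj_iff hbc).1 ebc h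

end Rep12

namespace SimpleGraph

variable {V W : Type*} {G : SimpleGraph V}

/-- No open neighbourhood `N(u)` lies inside the closed neighbourhood `N[v]` of another vertex. -/
def HasPrivateNeighbors (G : SimpleGraph V) : Prop :=
  ∀ ⦃u v : V⦄, u ≠ v → ∃ x, x ≠ v ∧ G.Adj u x ∧ ¬ G.Adj v x

theorem HasPrivateNeighbors.map (hG : G.HasPrivateNeighbors) (f : V ≃ W) :
    (G.map f.toEmbedding).HasPrivateNeighbors := by
  intro u v huv
  obtain ⟨u, rfl⟩ := f.surjective u
  obtain ⟨v, rfl⟩ := f.surjective v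
  obtain ⟨x, hxv, hux, hvx⟩ := hG (f.injective.ne_iff.1 huv)
  exact ⟨f x, f.injective.ne hxv, map_adj_apply (f := f.toEmbedding).2 hux,
    mt (map_adj_apply (f := f.toEmbedding)).1 hvx⟩

open Fin.CommRing in
theorem cycleGraph_hasPrivateNeighbors {n : ℕ} (hn : 5 ≤ n) :
    (cycleGraph n).HasPrivateNeighbors := by
  obtain ⟨m, rfl⟩ : ∃ m, n = m + 3 + 2 := ⟨n - 5, by omega⟩
  have hk : (1 : Fin (m + 3 + 2)) ≠ 0 ∧ (2 : Fin (m + 3 + 2)) ≠ 0 ∧ (3 : Fin (m + 3 + 2)) ≠ 0 ∧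
      (4 : Fin (m + 3 + 2)) ≠ 0 := by
    refine ⟨?_, ?_, ?_, ?_⟩ <;>
      rw [ne_eq, Fin.ext_iff, Fin.coe_ofNat_eq_mod, Nat.mod_eq_of_lt (by omega)] <;> simp
  obtain ⟨h1, h2, h3, h4⟩ := hk
  intro u v huv
  by_cases hv : v = u + 1 ∨ v = u + 2
  · refine ⟨u - 1, ?_, cycleGraph_adj.2 (Or.inl (by ring)), ?_⟩
    · rintro rfl
      rcases hv with h | h
      · exact h2 (by linear_combination -h)
      · exact h3 (by linear_combination -h)
    · rw [cycleGraph_adj]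
      rintro (h | h) <;> rcases hv with rfl | rfl
      · exact h1 (by linear_combination h)
      · exact h2 (by linear_combination h)
      · exact h3 (by linear_combination -h)
      · exact h4 (by linear_combination -h)
  · push Not at hv
    refine ⟨u + 1, hv.1.symm, cycleGraph_adj.2 (Or.inr (by ring)), ?_⟩
    rw [cycleGraph_adj]
    rintro (h | h)
    · exact hv.2 (by linear_combination h)
    · exact huv (by linear_combination h)

end SimpleGraph

section I3J4Q4Free

variable {N : ℕ} {H : SimpleGraph (Fin N)}

theorem I3J4Q4Free.adj_of_lt_of_lt (hH : I3J4Q4Free H) {a b c : Fin N} (hab : a < b)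
    (hbc : b < c) (h₁ : H.Adj a b) (h₂ : H.Adj b c) : H.Adj a c :=
  by_contra fun h => hH.1 ⟨a, b, c, hab, hbc, h₁, h₂, h⟩

theorem I3J4Q4Free.adj_of_crossing (hH : I3J4Q4Free H) {a b c d : Fin N} (hab : a < b)
    (hbc : b < c) (hbd : b < d) (eac : H.Adj a c) (ebd : H.Adj b d) (nab : ¬ H.Adj a b)
    (nad : ¬ H.Adj a d) (nbc : ¬ H.Adj b c) : H.Adj c d := by
  by_contra ncd
  rcases lt_trichotomy c d with hcd | rfl | hdc
  · exact hH.2.1 ⟨a, b, c, d, hab, hbc, hcd, eac, ebd, nab, nad, nbc, ncd⟩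
  · exact nad eac
  · exact hH.2.2 ⟨a, b, d, c, hab, hbd, hdc, eac, ebd, nab, nad, nbc, fun h => ncd h.symm⟩

theorem SimpleGraph.HasPrivateNeighbors.not_i3j4q4Free (hH : H.HasPrivateNeighbors)
    (hN : 2 ≤ N) : ¬ I3J4Q4Free H := by
  intro hfree
  set s : Fin N := ⟨0, by omega⟩
  set p : Fin N := ⟨1, by omega⟩
  have hsp : s < p := Fin.mk_lt_mk.2 zero_lt_one
  have hp : ∀ {c}, c ≠ s → c ≠ p → p < c := by
    intro c hcs hcp
    simp only [ne_eq, Fin.ext_iff, Fin.lt_def, s, p] at hcs hcp ⊢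
    omega
  have nsp : ¬ H.Adj s p := fun h => by
    obtain ⟨q, hqs, hpq, hsq⟩ := hH hsp.ne'
    exact hsq (hfree.adj_of_lt_of_lt hsp (hp hqs hpq.ne') h hpq)
  obtain ⟨x, hxp, hsx, hpx⟩ := hH hsp.ne
  obtain ⟨y, hys, hpy, hsy⟩ := hH hsp.ne'
  have hx : p < x := hp hsx.ne' hxp
  have hy : p < y := hp hys hpy.ne'
  have hxy := hfree.adj_of_crossing hsp hx hy hsx hpy nsp hsy hpx
  rcases lt_or_gt_of_ne hxy.ne with hlt | hlt
  · exact hsy (hfree.adj_of_lt_of_lt (hsp.trans hx) hlt hsx hxy)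
  · exact hpx (hfree.adj_of_lt_of_lt hy hlt hpy hxy.symm)

end I3J4Q4Free

/-- No cycle of length at least 5 is 12-representable; equivalently $C_n$, $n ≥ 5$,
admits no $\{I_3,J_4,Q_4\}$-free labeling. -/
theorem cycle_not_rep12able {n : ℕ} (hn : 5 ≤ n) :
    ¬ Rep12able (SimpleGraph.cycleGraph n) ∧
    ¬ ∃ f : Fin n ≃ Fin (Fintype.card (Fin n)),
        I3J4Q4Free ((SimpleGraph.cycleGraph n).map f.toEmbedding) := by
  have no_labeling : ¬ ∃ f : Fin n ≃ Fin (Fintype.card (Fin n)),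
      I3J4Q4Free ((SimpleGraph.cycleGraph n).map f.toEmbedding) := by
    rintro ⟨f, hf⟩
    exact ((SimpleGraph.cycleGraph_hasPrivateNeighbors hn).map f).not_i3j4q4Free
      (by rw [Fintype.card_fin]; omega) hf
  exact ⟨fun ⟨f, w, hw⟩ => no_labeling ⟨f, hw.i3j4q4Free⟩, no_labeling⟩
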